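/- Under M ⊥ R | X, Y, G=1, the baseline propensity score satisfies p(R=1 | X=x, Y=0, G=1) = E[OR(X,Y) | R=1, X=x, G=1] / ( E[OR(X,Y) | R=1, X=x, G=1] + p(R=0 | X=x, G=1)/p(R=1 | X=x, G=1) ), where OR(x,y) = [p(R=0|X=x,Y=y,G=1) p(R=1|X=x,Y=0,G=1)] / [p(R=1|X=x,Y=y,G=1) p(R=0|X=x,Y=0,G=1)]. -/

import Mathlib

/-!
Write `p r y` for the probability of `R = r, X = x, Y = y, G = 1`. The stratum probabilities
cancel in the odds ratio, so `OR(x, y) = p 0 y * p 1 0 / (p 1 y * p 0 0)`; weighting by `p 1 y`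
and summing over `y` gives `E[OR | R = 1, X = x, G = 1] = (p 1 0 / p 0 0) * ρ`, where
`ρ = P(R = 0 | X = x, G = 1) / P(R = 1 | X = x, G = 1)`. The right-hand side is therefore
`(p 1 0 / p 0 0) / (p 1 0 / p 0 0 + 1) = p 1 0 / (p 0 0 + p 1 0)`, the left-hand side.
-/

open Finset Set Real

noncomputable def Pr {Ω : Type*} [Fintype Ω] (μ : Ω → ℝ) (A : Set Ω) : ℝ :=
  ∑ ω, A.indicator μ ω

noncomputable def cPr {Ω : Type*} [Fintype Ω] (μ : Ω → ℝ) (A B : Set Ω) : ℝ :=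
  Pr μ (A ∩ B) / Pr μ B

noncomputable def cE {Ω : Type*} [Fintype Ω] (μ : Ω → ℝ) (f : Ω → ℝ) (B : Set Ω) : ℝ :=
  (∑ ω, B.indicator (fun ω' => μ ω' * f ω') ω) / Pr μ B

noncomputable def OddsR {Ω 𝓧 : Type*} [Fintype Ω] (μ : Ω → ℝ) (X : Ω → 𝓧) (Y : Ω → ℝ)
    (R G : Ω → ℕ) (x : 𝓧) (y : ℝ) : ℝ :=
  (cPr μ {ω | R ω = 0} {ω | X ω = x ∧ Y ω = y ∧ G ω = 1} *
      cPr μ {ω | R ω = 1} {ω | X ω = x ∧ Y ω = 0 ∧ G ω = 1}) /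
  (cPr μ {ω | R ω = 1} {ω | X ω = x ∧ Y ω = y ∧ G ω = 1} *
      cPr μ {ω | R ω = 0} {ω | X ω = x ∧ Y ω = 0 ∧ G ω = 1})

section
variable {Ω : Type*} [Fintype Ω]

lemma Pr_mono {μ : Ω → ℝ} (hμ : ∀ ω, 0 ≤ μ ω) {A B : Set Ω} (h : A ⊆ B) :
    Pr μ A ≤ Pr μ B :=
  Finset.sum_le_sum fun ω _ => Set.indicator_le_indicator_of_subset h hμ ω

variable (μ : Ω → ℝ)

lemma Pr_inter_add_Pr_compl_inter (A B : Set Ω) :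
    Pr μ (A ∩ B) + Pr μ (Aᶜ ∩ B) = Pr μ B := by
  simp only [Pr, ← Finset.sum_add_distrib, ← Set.indicator_indicator,
    Set.indicator_self_add_compl_apply]

lemma cE_congr {f g : Ω → ℝ} {B : Set Ω} (h : ∀ ω ∈ B, f ω = g ω) :
    cE μ f B = cE μ g B := by
  unfold cE
  congr 1
  exact Finset.sum_congr rfl fun ω _ =>
    congrFun (Set.indicator_congr fun ω hω => by rw [h ω hω]) ω

lemma sum_indicator_mul_comp_eq_sum_image {β : Type*} [DecidableEq β] (φ : β → ℝ) (f : Ω → β)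
    (A : Set Ω) :
    ∑ ω, A.indicator (fun ω => μ ω * φ (f ω)) ω =
      ∑ b ∈ univ.image f, φ b * Pr μ (A ∩ {ω | f ω = b}) := by
  rw [← Finset.sum_fiberwise_of_maps_to fun ω _ => Finset.mem_image_of_mem f (mem_univ ω)]
  refine Finset.sum_congr rfl fun b _ => ?_
  rw [Pr, Finset.mul_sum, Finset.sum_filter]
  refine Finset.sum_congr rfl fun ω _ => ?_
  by_cases hb : f ω = b
  · by_cases hA : ω ∈ A <;> simp [hb, hA, mul_comm]
  · simp [hb]

lemma cE_comp_eq_sum_image {β : Type*} [DecidableEq β] (φ : β → ℝ) (f : Ω → β) (A : Set Ω) :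
    cE μ (fun ω => φ (f ω)) A = (∑ b ∈ univ.image f, φ b * Pr μ (A ∩ {ω | f ω = b})) / Pr μ A :=
  congrArg (· / Pr μ A) (sum_indicator_mul_comp_eq_sum_image μ φ f A)

lemma Pr_eq_sum_image {β : Type*} [DecidableEq β] (f : Ω → β) (A : Set Ω) :
    Pr μ A = ∑ b ∈ univ.image f, Pr μ (A ∩ {ω | f ω = b}) := by
  simpa [Pr] using sum_indicator_mul_comp_eq_sum_image μ (fun _ => (1 : ℝ)) f A

lemma cPr_div_cPr {A A' B : Set Ω} (hB : Pr μ B ≠ 0) :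
    cPr μ A B / cPr μ A' B = Pr μ (A ∩ B) / Pr μ (A' ∩ B) :=
  div_div_div_cancel_right₀ hB _ _

lemma Pr_eq_add_of_binary {R : Ω → ℕ} (hR : ∀ ω, R ω = 0 ∨ R ω = 1) (B : Set Ω) :
    Pr μ B = Pr μ ({ω | R ω = 0} ∩ B) + Pr μ ({ω | R ω = 1} ∩ B) := by
  have hcompl : {ω | R ω = 0}ᶜ = {ω | R ω = 1} := by
    ext ω; rcases hR ω with h | h <;> simp [h]
  rw [← hcompl, Pr_inter_add_Pr_compl_inter]

end

section
variable {Ω 𝓧 : Type*} [Fintype Ω] (μ : Ω → ℝ) (X : Ω → 𝓧) (Y : Ω → ℝ) (R G : Ω → ℕ) (x : 𝓧)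

lemma OddsR_eq_div {y : ℝ} (hy : Pr μ {ω | X ω = x ∧ Y ω = y ∧ G ω = 1} ≠ 0)
    (h0 : Pr μ {ω | X ω = x ∧ Y ω = 0 ∧ G ω = 1} ≠ 0) :
    OddsR μ X Y R G x y =
      Pr μ ({ω | R ω = 0} ∩ {ω | X ω = x ∧ Y ω = y ∧ G ω = 1}) *
          Pr μ ({ω | R ω = 1} ∩ {ω | X ω = x ∧ Y ω = 0 ∧ G ω = 1}) /
        (Pr μ ({ω | R ω = 1} ∩ {ω | X ω = x ∧ Y ω = y ∧ G ω = 1}) *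
          Pr μ ({ω | R ω = 0} ∩ {ω | X ω = x ∧ Y ω = 0 ∧ G ω = 1})) := by
  rw [OddsR, cPr, cPr, cPr, cPr, div_mul_div_comm, div_mul_div_comm,
    div_div_div_cancel_right₀ (mul_ne_zero hy h0)]

lemma Pr_inter_eq_stratum (r : ℕ) (y : ℝ) :
    Pr μ (({ω | R ω = r} ∩ {ω | X ω = x ∧ G ω = 1}) ∩ {ω | Y ω = y}) =
      Pr μ ({ω | R ω = r} ∩ {ω | X ω = x ∧ Y ω = y ∧ G ω = 1}) := by
  congr 1; ext ω; simp only [Set.mem_inter_iff, Set.mem_ofPred_eq]; tauto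

variable {μ X Y R G x}

lemma cE_OddsR_eq (hR : ∀ ω, R ω = 0 ∨ R ω = 1)
    (hpos : ∀ y ∈ Set.range Y, ∀ r : ℕ, (r = 0 ∨ r = 1) →
      0 < Pr μ ({ω | R ω = r} ∩ {ω | X ω = x ∧ Y ω = y ∧ G ω = 1}))
    (h0Y : (0 : ℝ) ∈ Set.range Y) :
    cE μ (fun ω => OddsR μ X Y R G (X ω) (Y ω)) {ω | R ω = 1 ∧ X ω = x ∧ G ω = 1} =
      Pr μ ({ω | R ω = 1} ∩ {ω | X ω = x ∧ Y ω = 0 ∧ G ω = 1}) /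
          Pr μ ({ω | R ω = 0} ∩ {ω | X ω = x ∧ Y ω = 0 ∧ G ω = 1}) *
        Pr μ ({ω | R ω = 0} ∩ {ω | X ω = x ∧ G ω = 1}) /
        Pr μ ({ω | R ω = 1} ∩ {ω | X ω = x ∧ G ω = 1}) := by
  have hstratum : ∀ y ∈ Set.range Y, Pr μ {ω | X ω = x ∧ Y ω = y ∧ G ω = 1} ≠ 0 := fun y hy => by
    rw [Pr_eq_add_of_binary μ hR]
    exact (add_pos (hpos y hy 0 (.inl rfl)) (hpos y hy 1 (.inr rfl))).ne'
  rw [cE_congr μ (g := fun ω => OddsR μ X Y R G x (Y ω)) fun ω hω => by rw [hω.2.1],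
    cE_comp_eq_sum_image μ _ Y, Pr_eq_sum_image μ Y ({ω | R ω = 0} ∩ {ω | X ω = x ∧ G ω = 1}),
    Finset.mul_sum]
  congr 1
  refine Finset.sum_congr rfl fun y hy => ?_
  obtain ⟨ω, -, rfl⟩ := Finset.mem_image.1 hy
  have h1 := (hpos _ ⟨ω, rfl⟩ 1 (.inr rfl)).ne'
  have h00 := (hpos 0 h0Y 0 (.inl rfl)).ne'
  rw [show {ω | R ω = 1 ∧ X ω = x ∧ G ω = 1} = {ω | R ω = 1} ∩ {ω | X ω = x ∧ G ω = 1} from rfl,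
    Pr_inter_eq_stratum, Pr_inter_eq_stratum,
    OddsR_eq_div μ X Y R G x (hstratum _ ⟨ω, rfl⟩) (hstratum 0 h0Y)]
  field_simp

end

theorem stmt5_general
    {Ω 𝓧 𝓜 : Type*} [Fintype Ω]
    (μ : Ω → ℝ) (X : Ω → 𝓧) (M : Ω → 𝓜) (Y : Ω → ℝ) (R G : Ω → ℕ)
    (hμ0 : ∀ ω, 0 ≤ μ ω)
    (hR : ∀ ω, R ω = 0 ∨ R ω = 1)
    (h0Y : (0 : ℝ) ∈ Set.range Y)
    (hpos : ∀ x ∈ Set.range X, ∀ m ∈ Set.range M, ∀ y ∈ Set.range Y, ∀ r : ℕ,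
      (r = 0 ∨ r = 1) →
      0 < Pr μ {ω | X ω = x ∧ M ω = m ∧ Y ω = y ∧ R ω = r ∧ G ω = 1})
 :
    ∀ x ∈ Set.range X,
      cPr μ {ω | R ω = 1} {ω | X ω = x ∧ Y ω = 0 ∧ G ω = 1} =
        cE μ (fun ω => OddsR μ X Y R G (X ω) (Y ω)) {ω | R ω = 1 ∧ X ω = x ∧ G ω = 1} /
          (cE μ (fun ω => OddsR μ X Y R G (X ω) (Y ω)) {ω | R ω = 1 ∧ X ω = x ∧ G ω = 1} +
            cPr μ {ω | R ω = 0} {ω | X ω = x ∧ G ω = 1} /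
              cPr μ {ω | R ω = 1} {ω | X ω = x ∧ G ω = 1}) := by
  intro x hx
  have ⟨ω₀, _⟩ := hx
  have hjoint : ∀ y ∈ Set.range Y, ∀ r : ℕ, (r = 0 ∨ r = 1) →
      0 < Pr μ ({ω | R ω = r} ∩ {ω | X ω = x ∧ Y ω = y ∧ G ω = 1}) := fun y hy r hr =>
    (hpos x hx (M ω₀) ⟨ω₀, rfl⟩ y hy r hr).trans_le <|
      Pr_mono hμ0 fun _ ⟨hx', _, hy', hr', hg'⟩ => ⟨hr', hx', hy', hg'⟩
  have hmarginal : ∀ r : ℕ, (r = 0 ∨ r = 1) →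
      0 < Pr μ ({ω | R ω = r} ∩ {ω | X ω = x ∧ G ω = 1}) := fun r hr =>
    (hjoint 0 h0Y r hr).trans_le <| Pr_mono hμ0 fun _ ⟨hr', hx', _, hg'⟩ => ⟨hr', hx', hg'⟩
  have hp₀ := hjoint 0 h0Y 0 (.inl rfl)
  have hp₁ := hjoint 0 h0Y 1 (.inr rfl)
  have ht₀ := hmarginal 0 (.inl rfl)
  have ht₁ := hmarginal 1 (.inr rfl)
  have hC : Pr μ {ω | X ω = x ∧ G ω = 1} ≠ 0 := by
    rw [Pr_eq_add_of_binary μ hR]; exact (add_pos ht₀ ht₁).ne'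
  rw [cE_OddsR_eq hR hjoint h0Y, cPr_div_cPr μ hC, cPr,
    Pr_eq_add_of_binary μ hR {ω | X ω = x ∧ Y ω = 0 ∧ G ω = 1}]
  field_simp
  ring

theorem stmt5
    {Ω 𝓧 𝓜 : Type*} [Fintype Ω]
    (μ : Ω → ℝ) (X : Ω → 𝓧) (M : Ω → 𝓜) (Y : Ω → ℝ) (R G : Ω → ℕ)
    (hμ0 : ∀ ω, 0 ≤ μ ω) (hμ1 : ∑ ω, μ ω = 1)
    (hR : ∀ ω, R ω = 0 ∨ R ω = 1)
    (h0Y : (0 : ℝ) ∈ Set.range Y)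
    (hpos : ∀ x ∈ Set.range X, ∀ m ∈ Set.range M, ∀ y ∈ Set.range Y, ∀ r : ℕ,
      (r = 0 ∨ r = 1) →
      0 < Pr μ {ω | X ω = x ∧ M ω = m ∧ Y ω = y ∧ R ω = r ∧ G ω = 1})
    (hCI : ∀ (m : 𝓜) (r : ℕ) (x : 𝓧) (y : ℝ),
      0 < Pr μ {ω | X ω = x ∧ Y ω = y ∧ G ω = 1} →
      cPr μ {ω | M ω = m ∧ R ω = r} {ω | X ω = x ∧ Y ω = y ∧ G ω = 1} =
        cPr μ {ω | M ω = m} {ω | X ω = x ∧ Y ω = y ∧ G ω = 1} *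
        cPr μ {ω | R ω = r} {ω | X ω = x ∧ Y ω = y ∧ G ω = 1})
 :
    ∀ x ∈ Set.range X,
      cPr μ {ω | R ω = 1} {ω | X ω = x ∧ Y ω = 0 ∧ G ω = 1} =
        cE μ (fun ω => OddsR μ X Y R G (X ω) (Y ω)) {ω | R ω = 1 ∧ X ω = x ∧ G ω = 1} /
          (cE μ (fun ω => OddsR μ X Y R G (X ω) (Y ω)) {ω | R ω = 1 ∧ X ω = x ∧ G ω = 1} +
            cPr μ {ω | R ω = 0} {ω | X ω = x ∧ G ω = 1} /
              cPr μ {ω | R ω = 1} {ω | X ω = x ∧ G ω = 1}) :=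
  stmt5_general μ X M Y R G hμ0 hR h0Y hpos
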